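/- Let k be a field, n a natural number, and (V,U,T) an object of S_k(n) with dimension pair (v,u). Let V* = Hom_k(V,k), let T* : V* → V* be the transpose of T, and let U⁰ = {φ ∈ V* : φ(x) = 0 for all x ∈ U} be the annihilator of U. Then (V*, U⁰, T*) is an object of S_k(n) with dimension pair (v, v−u), and (V*, U⁰, T*) is indecomposable if and only if (V,U,T) is indecomposable. (This is the self-duality of S_k(n); in particular, (v,u) occurs as the dimension pair of an indecomposable object of S_k(n) if and only if (v, v−u) does.) -/
import Mathlib


universe u

/-- Indecomposability of a triple `(V,U,T)`: `V` is nonzero and there is no decomposition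
`V = V₁ ⊕ V₂` into two nonzero `T`-invariant subspaces with `U = (U ∩ V₁) ⊕ (U ∩ V₂)`. -/
def IndecTriple (k : Type u) [Field k] {V : Type u} [AddCommGroup V] [Module k V]
    (U : Submodule k V) (T : V →ₗ[k] V) : Prop :=
  (∃ v : V, v ≠ 0) ∧
    ¬∃ V₁ V₂ : Submodule k V,
        V₁ ≠ ⊥ ∧ V₂ ≠ ⊥ ∧ IsCompl V₁ V₂ ∧
          (∀ x ∈ V₁, T x ∈ V₁) ∧ (∀ x ∈ V₂, T x ∈ V₂) ∧
            U = U ⊓ V₁ ⊔ U ⊓ V₂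

/-- Decomposability of a triple. -/
def TDecomp (k : Type u) [Field k] {V : Type u} [AddCommGroup V] [Module k V]
    (U : Submodule k V) (T : V →ₗ[k] V) : Prop :=
  ∃ V₁ V₂ : Submodule k V,
      V₁ ≠ ⊥ ∧ V₂ ≠ ⊥ ∧ IsCompl V₁ V₂ ∧
        (∀ x ∈ V₁, T x ∈ V₁) ∧ (∀ x ∈ V₂, T x ∈ V₂) ∧
          U = U ⊓ V₁ ⊔ U ⊓ V₂

lemma dualAnnihilator_ne_bot_of_ne_top {k : Type u} [Field k] {V : Type u}
    [AddCommGroup V] [Module k V] {W : Submodule k V} (h : W ≠ ⊤) :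
    W.dualAnnihilator ≠ ⊥ := by
  intro hb
  apply h
  have : W.dualAnnihilator ≤ (⊤ : Submodule k V).dualAnnihilator := by
    rw [Submodule.dualAnnihilator_top, hb]
  exact top_le_iff.mp (Subspace.dualAnnihilator_le_dualAnnihilator_iff.mp this)

/-- The key lattice computation: from `U = (U ⊓ V₁) ⊔ (U ⊓ V₂)` and complementarity,
`(U ⊔ V₂) ⊓ (U ⊔ V₁) = U`. -/
lemma sup_inf_sup_eq {k : Type u} [Field k] {V : Type u}
    [AddCommGroup V] [Module k V] {U V₁ V₂ : Submodule k V}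
    (hc : IsCompl V₁ V₂) (hU : U = U ⊓ V₁ ⊔ U ⊓ V₂) :
    (U ⊔ V₂) ⊓ (U ⊔ V₁) = U := by
  set a := U ⊓ V₁
  set b := U ⊓ V₂
  have ha : a ≤ V₁ := inf_le_right
  have hb : b ≤ V₂ := inf_le_right
  have h1 : U ⊔ V₂ = a ⊔ V₂ := by
    conv_lhs => rw [hU]
    rw [sup_assoc, sup_eq_right.mpr hb]
  have h2 : U ⊔ V₁ = b ⊔ V₁ := by
    conv_lhs => rw [hU]
    rw [sup_comm a b, sup_assoc, sup_eq_right.mpr ha]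
  rw [h1, h2]
  have hab : a ≤ b ⊔ V₁ := le_sup_of_le_right ha
  rw [sup_inf_assoc_of_le _ hab]
  have : V₂ ⊓ (b ⊔ V₁) = b := by
    rw [inf_comm, sup_inf_assoc_of_le _ hb, (disjoint_iff.mp hc.disjoint), sup_bot_eq]
  rw [this, ← hU]

/-- Dualizing a decomposition. -/
lemma tdecomp_dual {k : Type u} [Field k] {V : Type u}
    [AddCommGroup V] [Module k V]
    {U : Submodule k V} {T : V →ₗ[k] V} (h : TDecomp k U T) :
    TDecomp k U.dualAnnihilator T.dualMap := by
  obtain ⟨V₁, V₂, h1, h2, hc, hT1, hT2, hU⟩ := h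
  refine ⟨V₂.dualAnnihilator, V₁.dualAnnihilator, ?_, ?_, ?_, ?_, ?_, ?_⟩
  · exact dualAnnihilator_ne_bot_of_ne_top (fun h => h1 (by
      simpa [disjoint_iff, h] using hc.disjoint))
  · exact dualAnnihilator_ne_bot_of_ne_top (fun h => h2 (by
      simpa [disjoint_iff, h] using hc.disjoint.symm))
  · exact Subspace.isCompl_dualAnnihilator hc.symm
  · intro φ hφ
    rw [Submodule.mem_dualAnnihilator] at hφ ⊢
    intro x hx
    exact hφ _ (hT2 x hx)
  · intro φ hφ
    rw [Submodule.mem_dualAnnihilator] at hφ ⊢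
    intro x hx
    exact hφ _ (hT1 x hx)
  · rw [← Submodule.dualAnnihilator_sup_eq U V₂, ← Submodule.dualAnnihilator_sup_eq U V₁,
      ← Subspace.dualAnnihilator_inf_eq, sup_inf_sup_eq hc hU]

/-- Transporting a decomposition along a linear equivalence commuting with the maps. -/
lemma tdecomp_of_equiv {k : Type u} [Field k] {V W : Type u}
    [AddCommGroup V] [Module k V] [AddCommGroup W] [Module k W]
    (e : V ≃ₗ[k] W) {U : Submodule k V} {T : V →ₗ[k] V} {T' : W →ₗ[k] W}
    (hT : ∀ x, T' (e x) = e (T x)) (h : TDecomp k U T) :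
    TDecomp k (U.map (e : V →ₗ[k] W)) T' := by
  obtain ⟨V₁, V₂, h1, h2, hc, hT1, hT2, hU⟩ := h
  have hinj : Function.Injective (e : V →ₗ[k] W) := e.injective
  refine ⟨V₁.map (e : V →ₗ[k] W), V₂.map (e : V →ₗ[k] W), ?_, ?_, ?_, ?_, ?_, ?_⟩
  · intro hb
    apply h1
    rw [eq_bot_iff]
    intro x hx
    have : e x ∈ (⊥ : Submodule k W) := hb ▸ Submodule.mem_map_of_mem hx
    simpa using e.injective (by simpa using this : e x = e 0)
  · intro hb
    apply h2
    rw [eq_bot_iff]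
    intro x hx
    have : e x ∈ (⊥ : Submodule k W) := hb ▸ Submodule.mem_map_of_mem hx
    simpa using e.injective (by simpa using this : e x = e 0)
  · constructor
    · rw [disjoint_iff, ← Submodule.map_inf _ hinj, disjoint_iff.mp hc.disjoint,
        Submodule.map_bot]
    · rw [codisjoint_iff, ← Submodule.map_sup, codisjoint_iff.mp hc.codisjoint,
        Submodule.map_top, LinearEquiv.range]
  · rintro y ⟨x, hx, rfl⟩
    exact ⟨T x, hT1 x hx, (hT x).symm⟩
  · rintro y ⟨x, hx, rfl⟩
    exact ⟨T x, hT2 x hx, (hT x).symm⟩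
  · rw [← Submodule.map_inf _ hinj, ← Submodule.map_inf _ hinj, ← Submodule.map_sup, ← hU]

/-- Self-duality of `S_k(n)`: if `(V,U,T)` is an object of `S_k(n)` with dimension pair
`(v,u)`, then `(V*, U⁰, T*)` is an object of `S_k(n)` with dimension pair `(v, v−u)`,
and it is indecomposable iff `(V,U,T)` is. -/
theorem stmt18 (k : Type u) [Field k] (n : ℕ)
    (V : Type u) [AddCommGroup V] [Module k V] [FiniteDimensional k V]
    (U : Submodule k V) (T : V →ₗ[k] V)
    (hT : T ^ n = 0) (hU : ∀ x ∈ U, T x ∈ U) :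
    T.dualMap ^ n = 0 ∧
    (∀ φ ∈ U.dualAnnihilator, T.dualMap φ ∈ U.dualAnnihilator) ∧
    Module.finrank k (Module.Dual k V) = Module.finrank k V ∧
    Module.finrank k U.dualAnnihilator = Module.finrank k V - Module.finrank k U ∧
    (IndecTriple k U.dualAnnihilator T.dualMap ↔ IndecTriple k U T) := by
  have hpow : ∀ m : ℕ, (T ^ m).dualMap = T.dualMap ^ m := by
    intro m
    induction m with
    | zero => simp only [pow_zero, Module.End.one_eq_id, LinearMap.dualMap_id]
    | succ m ih =>
        rw [pow_succ, pow_succ']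
        ext φ x
        simp [LinearMap.dualMap_apply', ← ih]
  refine ⟨by rw [← hpow, hT]; ext φ x; simp, ?_, Subspace.dual_finrank_eq, ?_, ?_⟩
  · intro φ hφ
    rw [Submodule.mem_dualAnnihilator] at hφ ⊢
    intro x hx
    exact hφ _ (hU x hx)
  · have h1 := Submodule.finrank_quotient_add_finrank U
    have h2 : Module.finrank k (V ⧸ U) = Module.finrank k U.dualAnnihilator :=
      (Subspace.quotEquivAnnihilator U).finrank_eq
    omega
  · -- indecomposability iff
    have key : ∀ x : V, T.dualMap.dualMap (Module.evalEquiv k V x)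
        = Module.evalEquiv k V (T x) := by
      intro x
      ext φ
      simp [Module.evalEquiv_apply, Module.Dual.eval_apply, LinearMap.dualMap_apply']
    have hbidual : (U.dualAnnihilator).dualAnnihilator
        = U.map ((Module.evalEquiv k V : V →ₗ[k] Module.Dual k (Module.Dual k V))) := by
      rw [Subspace.dualAnnihilator_dualAnnihilator_eq_map, Module.evalEquiv_toLinearMap]
    have hnz : (∃ φ : Module.Dual k V, φ ≠ 0) ↔ (∃ v : V, v ≠ 0) := by
      constructor
      · rintro ⟨φ, hφ⟩
        by_contra h
        push_neg at h
        apply hφ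
        ext x
        simp [h x]
      · rintro ⟨v, hv⟩
        rw [Ne, ← Module.forall_dual_apply_eq_zero_iff k v] at hv
        push_neg at hv
        obtain ⟨φ, hφ⟩ := hv
        exact ⟨φ, fun h => hφ (by simp [h])⟩
    have hdec : TDecomp k U.dualAnnihilator T.dualMap ↔ TDecomp k U T := by
      constructor
      · intro h
        have h2 := tdecomp_dual h
        rw [hbidual] at h2
        have h3 := tdecomp_of_equiv (Module.evalEquiv k V).symm
          (T := T.dualMap.dualMap) (T' := T)
          (fun x => by
            apply (Module.evalEquiv k V).injective
            rw [LinearEquiv.apply_symm_apply, ← key, LinearEquiv.apply_symm_apply]) h2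
        have : (U.map ((Module.evalEquiv k V : V →ₗ[k] Module.Dual k (Module.Dual k V)))).map
            ((Module.evalEquiv k V).symm : Module.Dual k (Module.Dual k V) →ₗ[k] V) = U := by
          ext x
          simp only [Submodule.mem_map, LinearEquiv.coe_coe]
          constructor
          · rintro ⟨y, ⟨z, hz, rfl⟩, rfl⟩
            rwa [LinearEquiv.symm_apply_apply]
          · intro hx
            exact ⟨Module.evalEquiv k V x, ⟨x, hx, rfl⟩,
              (Module.evalEquiv k V).symm_apply_apply x⟩
        rwa [this] at h3
      · exact tdecomp_dual
    constructor
    · rintro ⟨hne, hnd⟩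
      exact ⟨hnz.mp hne, fun h => hnd (hdec.mpr h)⟩
    · rintro ⟨hne, hnd⟩
      exact ⟨hnz.mpr hne, fun h => hnd (hdec.mp h)⟩
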